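/- arXiv:2603.18763 — 8 statements merged into one kernel-verified Lean document; each statement's English description precedes it below -/
import Mathlib

section
/- Let (t₁,t₂,t₃) be a triality on (V₁,q₁), (V₂,q₂), (V₃,q₃). Then for all v₁ ∈ V₁, v₂ ∈ V₂, v₃ ∈ V₃ the following six identities hold: t₂(v₁, t₃(v₁,v₂)) = q₁(v₁) • v₂; t₃(v₁, t₂(v₁,v₃)) = q₁(v₁) • v₃; t₁(v₂, t₃(v₁,v₂)) = q₂(v₂) • v₁; t₃(t₁(v₂,v₃), v₂) = q₂(v₂) • v₃; t₁(t₂(v₁,v₃), v₃) = q₃(v₃) • v₁; t₂(t₁(v₂,v₃), v₃) = q₃(v₃) • v₂. -/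
open QuadraticMap

/-- Polarize a multiplicative identity in the first (left) slot. -/
lemma triality_polar_left {V W U : Type*}
    [AddCommGroup V] [Module ℂ V] [AddCommGroup W] [Module ℂ W]
    [AddCommGroup U] [Module ℂ U]
    (q : QuadraticForm ℂ U) (qa : QuadraticForm ℂ V) (qb : QuadraticForm ℂ W)
    (t : V →ₗ[ℂ] W →ₗ[ℂ] U) (ho : ∀ x y, q (t x y) = qa x * qb y)
    (x x' : V) (y : W) :
    polar q (t x y) (t x' y) = polar qa x x' * qb y := by
  simp only [QuadraticMap.polar]
  rw [← LinearMap.add_apply, ← map_add, ho, ho, ho]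
  ring

/-- Polarize a multiplicative identity in the second (right) slot. -/
lemma triality_polar_right {V W U : Type*}
    [AddCommGroup V] [Module ℂ V] [AddCommGroup W] [Module ℂ W]
    [AddCommGroup U] [Module ℂ U]
    (q : QuadraticForm ℂ U) (qa : QuadraticForm ℂ V) (qb : QuadraticForm ℂ W)
    (t : V →ₗ[ℂ] W →ₗ[ℂ] U) (ho : ∀ x y, q (t x y) = qa x * qb y)
    (x : V) (y y' : W) :
    polar q (t x y) (t x y') = qa x * polar qb y y' := by
  simp only [QuadraticMap.polar]
  rw [← map_add, ho, ho, ho]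
  ring

lemma triality_eq_of_polar {V : Type*} [AddCommGroup V] [Module ℂ V]
    (q : QuadraticForm ℂ V)
    (hn : ∀ x : V, (∀ y : V, polar q x y = 0) → x = 0)
    {x y : V} (h : ∀ w, polar q x w = polar q y w) : x = y := by
  have := hn (x - y) (fun w => by rw [polar_sub_left, h w, sub_self])
  exact sub_eq_zero.mp this

/-- Lemma 2.10 ("compute tool"), unpolarized form: in a triality `(t₁, t₂, t₃)` on
`(V₁,q₁), (V₂,q₂), (V₃,q₃)` over `ℂ`, one has `vᵢ (vᵢ vₖ) = qᵢ(vᵢ) vₖ` in all six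
possible configurations. -/
theorem triality_mul_self_smul
    {V₁ V₂ V₃ : Type*}
    [AddCommGroup V₁] [Module ℂ V₁] [FiniteDimensional ℂ V₁] [Nontrivial V₁]
    [AddCommGroup V₂] [Module ℂ V₂] [FiniteDimensional ℂ V₂] [Nontrivial V₂]
    [AddCommGroup V₃] [Module ℂ V₃] [FiniteDimensional ℂ V₃] [Nontrivial V₃]
    (q₁ : QuadraticForm ℂ V₁) (q₂ : QuadraticForm ℂ V₂) (q₃ : QuadraticForm ℂ V₃)
    (hn₁ : ∀ x : V₁, (∀ y : V₁, polar q₁ x y = 0) → x = 0)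
    (hn₂ : ∀ x : V₂, (∀ y : V₂, polar q₂ x y = 0) → x = 0)
    (hn₃ : ∀ x : V₃, (∀ y : V₃, polar q₃ x y = 0) → x = 0)
    (t₁ : V₂ →ₗ[ℂ] V₃ →ₗ[ℂ] V₁)
    (t₂ : V₁ →ₗ[ℂ] V₃ →ₗ[ℂ] V₂)
    (t₃ : V₁ →ₗ[ℂ] V₂ →ₗ[ℂ] V₃)
    (hT₁₂ : ∀ (v₁ : V₁) (v₂ : V₂) (v₃ : V₃),
      polar q₁ (t₁ v₂ v₃) v₁ = polar q₂ (t₂ v₁ v₃) v₂)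
    (hT₂₃ : ∀ (v₁ : V₁) (v₂ : V₂) (v₃ : V₃),
      polar q₂ (t₂ v₁ v₃) v₂ = polar q₃ (t₃ v₁ v₂) v₃)
    (ho₁ : ∀ (v₂ : V₂) (v₃ : V₃), q₁ (t₁ v₂ v₃) = q₂ v₂ * q₃ v₃)
    (ho₂ : ∀ (v₁ : V₁) (v₃ : V₃), q₂ (t₂ v₁ v₃) = q₁ v₁ * q₃ v₃)
    (ho₃ : ∀ (v₁ : V₁) (v₂ : V₂), q₃ (t₃ v₁ v₂) = q₁ v₁ * q₂ v₂) :
    ∀ (v₁ : V₁) (v₂ : V₂) (v₃ : V₃),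
      t₂ v₁ (t₃ v₁ v₂) = q₁ v₁ • v₂ ∧
      t₃ v₁ (t₂ v₁ v₃) = q₁ v₁ • v₃ ∧
      t₁ v₂ (t₃ v₁ v₂) = q₂ v₂ • v₁ ∧
      t₃ (t₁ v₂ v₃) v₂ = q₂ v₂ • v₃ ∧
      t₁ (t₂ v₁ v₃) v₃ = q₃ v₃ • v₁ ∧
      t₂ (t₁ v₂ v₃) v₃ = q₃ v₃ • v₂ := by
  intro v₁ v₂ v₃
  refine ⟨?_, ?_, ?_, ?_, ?_, ?_⟩
  · refine triality_eq_of_polar q₂ hn₂ fun w₂ => ?_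
    calc polar q₂ (t₂ v₁ (t₃ v₁ v₂)) w₂
        = polar q₃ (t₃ v₁ w₂) (t₃ v₁ v₂) := hT₂₃ v₁ w₂ (t₃ v₁ v₂)
      _ = q₁ v₁ * polar q₂ w₂ v₂ := triality_polar_right q₃ q₁ q₂ t₃ ho₃ v₁ w₂ v₂
      _ = polar q₂ (q₁ v₁ • v₂) w₂ := by
          rw [polar_smul_left, smul_eq_mul, polar_comm]
  · refine triality_eq_of_polar q₃ hn₃ fun w₃ => ?_
    calc polar q₃ (t₃ v₁ (t₂ v₁ v₃)) w₃
        = polar q₂ (t₂ v₁ w₃) (t₂ v₁ v₃) := (hT₂₃ v₁ (t₂ v₁ v₃) w₃).symm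
      _ = q₁ v₁ * polar q₃ w₃ v₃ := triality_polar_right q₂ q₁ q₃ t₂ ho₂ v₁ w₃ v₃
      _ = polar q₃ (q₁ v₁ • v₃) w₃ := by
          rw [polar_smul_left, smul_eq_mul, polar_comm]
  · refine triality_eq_of_polar q₁ hn₁ fun w₁ => ?_
    calc polar q₁ (t₁ v₂ (t₃ v₁ v₂)) w₁
        = polar q₂ (t₂ w₁ (t₃ v₁ v₂)) v₂ := hT₁₂ w₁ v₂ (t₃ v₁ v₂)
      _ = polar q₃ (t₃ w₁ v₂) (t₃ v₁ v₂) := hT₂₃ w₁ v₂ (t₃ v₁ v₂)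
      _ = polar q₁ w₁ v₁ * q₂ v₂ := triality_polar_left q₃ q₁ q₂ t₃ ho₃ w₁ v₁ v₂
      _ = polar q₁ (q₂ v₂ • v₁) w₁ := by
          rw [polar_smul_left, smul_eq_mul, polar_comm, mul_comm]
  · refine triality_eq_of_polar q₃ hn₃ fun w₃ => ?_
    calc polar q₃ (t₃ (t₁ v₂ v₃) v₂) w₃
        = polar q₂ (t₂ (t₁ v₂ v₃) w₃) v₂ := (hT₂₃ (t₁ v₂ v₃) v₂ w₃).symm
      _ = polar q₁ (t₁ v₂ w₃) (t₁ v₂ v₃) := (hT₁₂ (t₁ v₂ v₃) v₂ w₃).symm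
      _ = q₂ v₂ * polar q₃ w₃ v₃ := triality_polar_right q₁ q₂ q₃ t₁ ho₁ v₂ w₃ v₃
      _ = polar q₃ (q₂ v₂ • v₃) w₃ := by
          rw [polar_smul_left, smul_eq_mul, polar_comm]
  · refine triality_eq_of_polar q₁ hn₁ fun w₁ => ?_
    calc polar q₁ (t₁ (t₂ v₁ v₃) v₃) w₁
        = polar q₂ (t₂ w₁ v₃) (t₂ v₁ v₃) := hT₁₂ w₁ (t₂ v₁ v₃) v₃
      _ = polar q₁ w₁ v₁ * q₃ v₃ := triality_polar_left q₂ q₁ q₃ t₂ ho₂ w₁ v₁ v₃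
      _ = polar q₁ (q₃ v₃ • v₁) w₁ := by
          rw [polar_smul_left, smul_eq_mul, polar_comm, mul_comm]
  · refine triality_eq_of_polar q₂ hn₂ fun w₂ => ?_
    calc polar q₂ (t₂ (t₁ v₂ v₃) v₃) w₂
        = polar q₁ (t₁ w₂ v₃) (t₁ v₂ v₃) := (hT₁₂ (t₁ v₂ v₃) w₂ v₃).symm
      _ = polar q₂ w₂ v₂ * q₃ v₃ := triality_polar_left q₁ q₂ q₃ t₁ ho₁ w₂ v₂ v₃
      _ = polar q₂ (q₃ v₃ • v₂) w₂ := by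
          rw [polar_smul_left, smul_eq_mul, polar_comm, mul_comm]
end

section
/- Let (t₁,t₂,t₃) be a triality on (V₁,q₁), (V₂,q₂), (V₃,q₃). Then the three spaces have equal dimension: dim V₁ = dim V₂ = dim V₃. -/
open QuadraticMap

/-- If a linear map scales a quadratic form by a nonzero constant and the source
form has nondegenerate polar form, then the source dimension is at most the target. -/
lemma aux_finrank_le {V W : Type*}
    [AddCommGroup V] [Module ℂ V] [FiniteDimensional ℂ V]
    [AddCommGroup W] [Module ℂ W] [FiniteDimensional ℂ W]
    (qV : QuadraticForm ℂ V) (qW : QuadraticForm ℂ W)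
    (hnW : ∀ x : W, (∀ y : W, polar qW x y = 0) → x = 0)
    (L : W →ₗ[ℂ] V) (c : ℂ) (hc : c ≠ 0)
    (h : ∀ x : W, qV (L x) = c * qW x) :
    Module.finrank ℂ W ≤ Module.finrank ℂ V := by
  apply LinearMap.finrank_le_finrank_of_injective (f := L)
  rw [injective_iff_map_eq_zero]
  intro x hLx
  apply hnW
  intro y
  have key : polar qV (L x) (L y) = c * polar qW x y := by
    simp only [QuadraticMap.polar, ← map_add, h]
    ring
  rw [hLx, polar_zero_left] at key
  have := key.symm
  rcases mul_eq_zero.mp this with h' | h'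
  · exact absurd h' hc
  · exact h'

lemma aux_exists_aniso {V : Type*} [AddCommGroup V] [Module ℂ V] [Nontrivial V]
    (q : QuadraticForm ℂ V)
    (hn : ∀ x : V, (∀ y : V, polar q x y = 0) → x = 0) :
    ∃ v : V, q v ≠ 0 := by
  by_contra h
  push_neg at h
  obtain ⟨x, hx⟩ := exists_ne (0 : V)
  exact hx (hn x (fun y => by simp [QuadraticMap.polar, h]))

/-- In a triality over ℂ, the three underlying vector spaces have equal dimension. -/
theorem triality_dim_eq
    {V₁ V₂ V₃ : Type*}
    [AddCommGroup V₁] [Module ℂ V₁] [FiniteDimensional ℂ V₁] [Nontrivial V₁]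
    [AddCommGroup V₂] [Module ℂ V₂] [FiniteDimensional ℂ V₂] [Nontrivial V₂]
    [AddCommGroup V₃] [Module ℂ V₃] [FiniteDimensional ℂ V₃] [Nontrivial V₃]
    (q₁ : QuadraticForm ℂ V₁) (q₂ : QuadraticForm ℂ V₂) (q₃ : QuadraticForm ℂ V₃)
    (hn₁ : ∀ x : V₁, (∀ y : V₁, polar q₁ x y = 0) → x = 0)
    (hn₂ : ∀ x : V₂, (∀ y : V₂, polar q₂ x y = 0) → x = 0)
    (hn₃ : ∀ x : V₃, (∀ y : V₃, polar q₃ x y = 0) → x = 0)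
    (t₁ : V₂ →ₗ[ℂ] V₃ →ₗ[ℂ] V₁)
    (t₂ : V₁ →ₗ[ℂ] V₃ →ₗ[ℂ] V₂)
    (t₃ : V₁ →ₗ[ℂ] V₂ →ₗ[ℂ] V₃)
    (hT₁₂ : ∀ (v₁ : V₁) (v₂ : V₂) (v₃ : V₃),
      polar q₁ (t₁ v₂ v₃) v₁ = polar q₂ (t₂ v₁ v₃) v₂)
    (hT₂₃ : ∀ (v₁ : V₁) (v₂ : V₂) (v₃ : V₃),
      polar q₂ (t₂ v₁ v₃) v₂ = polar q₃ (t₃ v₁ v₂) v₃)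
    (ho₁ : ∀ (v₂ : V₂) (v₃ : V₃), q₁ (t₁ v₂ v₃) = q₂ v₂ * q₃ v₃)
    (ho₂ : ∀ (v₁ : V₁) (v₃ : V₃), q₂ (t₂ v₁ v₃) = q₁ v₁ * q₃ v₃)
    (ho₃ : ∀ (v₁ : V₁) (v₂ : V₂), q₃ (t₃ v₁ v₂) = q₁ v₁ * q₂ v₂) :
    Module.finrank ℂ V₁ = Module.finrank ℂ V₂ ∧
    Module.finrank ℂ V₂ = Module.finrank ℂ V₃ := by
  obtain ⟨w₃, hw₃⟩ := aux_exists_aniso q₃ hn₃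
  obtain ⟨w₁, hw₁⟩ := aux_exists_aniso q₁ hn₁
  have h21 : Module.finrank ℂ V₂ ≤ Module.finrank ℂ V₁ :=
    aux_finrank_le q₁ q₂ hn₂ (t₁.flip w₃) (q₃ w₃) hw₃
      (fun x => by rw [LinearMap.flip_apply, ho₁]; ring)
  have h12 : Module.finrank ℂ V₁ ≤ Module.finrank ℂ V₂ :=
    aux_finrank_le q₂ q₁ hn₁ (t₂.flip w₃) (q₃ w₃) hw₃
      (fun x => by rw [LinearMap.flip_apply, ho₂]; ring)
  have h32 : Module.finrank ℂ V₃ ≤ Module.finrank ℂ V₂ :=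
    aux_finrank_le q₂ q₃ hn₃ (t₂ w₁) (q₁ w₁) hw₁
      (fun x => by rw [ho₂])
  have h23 : Module.finrank ℂ V₂ ≤ Module.finrank ℂ V₃ :=
    aux_finrank_le q₃ q₂ hn₂ (t₃ w₁) (q₁ w₁) hw₁
      (fun x => by rw [ho₃])
  exact ⟨le_antisymm h12 h21, le_antisymm h23 h32⟩
end

section
/- (Hurwitz) Let (t₁,t₂,t₃) be a triality on (V₁,q₁), (V₂,q₂), (V₃,q₃). Then the common dimension of the three spaces lies in {1, 2, 4, 8}; in particular dim V₁ ∈ {1, 2, 4, 8}. -/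
/-!
Evaluating the three orthogonal maps at a vector of norm one gives injections
`V₂ → V₁`, `V₁ → V₂`, `V₃ → V₁` and `V₁ → V₃`, so the dimensions agree, say `n`.
For an orthonormal basis `e₀, …, eₙ₋₁` of `V₂` the maps `Lᵢ = t₁ eᵢ : V₃ → V₁` are
isometries with `b(Lᵢ y, Lⱼ y') = -b(Lᵢ y', Lⱼ y)` for `i ≠ j`, so `Bᵢ = Lₙ₋₁⁻¹ Lᵢ`, `i < n - 1`,
are `n - 1` pairwise anticommuting endomorphisms of `V₃` squaring to `-1`.
For such a family `B₀, …, Bₘ₋₁`, `B₁` swaps the `±i`-eigenspaces of `B₀`, while the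
`B₁ Bⱼ`, `j ≥ 2`, form a family of the same kind on the `i`-eigenspace, which has half the
dimension. Hence `m ≤ 2a + 1` with `2ᵃ ∣ dim`, and `2ᵃ ≤ n ≤ 2a + 2` leaves `n ∈ {1, 2, 4, 8}`.
-/

open QuadraticMap Module

section Clifford

variable {K W : Type*} [Field K] [AddCommGroup W] [Module K W]

structure IsCliffordFamily {ι : Type*} (B : ι → End K W) : Prop where
  mul_self : ∀ i, B i * B i = -1
  anticomm : ∀ i j, i ≠ j → B i * B j = -(B j * B i)

theorem Module.End.apply_apply_eq_neg_of_mul_self {J : End K W} (hJ : J * J = -1) (x : W) :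
    J (J x) = -x := by
  simpa using LinearMap.congr_fun hJ x

theorem Module.End.isCompl_eigenspace_neg [NeZero (2 : K)] {J : End K W} (hJ : J * J = -1)
    {μ : K} (hμ : μ * μ = -1) : IsCompl (J.eigenspace μ) (J.eigenspace (-μ)) := by
  have hJJ := End.apply_apply_eq_neg_of_mul_self hJ
  have hμ0 : μ ≠ 0 := by rintro rfl; simp at hμ
  constructor
  · rw [Submodule.disjoint_def]
    intro x hx hx'
    rw [End.mem_eigenspace_iff] at hx hx'
    have : (2 * μ) • x = 0 := by rw [mul_smul, two_smul]; nth_rw 1 [← hx]; rw [hx']; module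
    exact (smul_eq_zero.mp this).resolve_left (mul_ne_zero two_ne_zero hμ0)
  · rw [codisjoint_iff, eq_top_iff]
    intro x _
    have hp : x - μ • J x ∈ J.eigenspace μ := by
      rw [End.mem_eigenspace_iff, map_sub, map_smul, hJJ]
      linear_combination (norm := module) hμ • J x
    have hq : x + μ • J x ∈ J.eigenspace (-μ) := by
      rw [End.mem_eigenspace_iff, map_add, map_smul, hJJ]
      linear_combination (norm := module) hμ • J x
    have hx : (2 : K) • x = (x - μ • J x) + (x + μ • J x) := by module
    rw [← inv_smul_smul₀ (two_ne_zero (α := K)) x, hx]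
    exact Submodule.smul_mem _ _ (Submodule.add_mem_sup hp hq)

theorem Module.End.mapsTo_eigenspace_neg_of_anticomm {J A : End K W} (h : J * A = -(A * J))
    (μ : K) : Set.MapsTo A (J.eigenspace μ) (J.eigenspace (-μ)) := by
  intro x hx
  rw [SetLike.mem_coe, End.mem_eigenspace_iff] at hx ⊢
  rw [← End.mul_apply, h, LinearMap.neg_apply, End.mul_apply, hx, map_smul, neg_smul]

theorem Module.End.finrank_le_finrank_of_injective_of_mapsTo [FiniteDimensional K W]
    {A : End K W} (hA : Function.Injective A) {p p' : Submodule K W} (h : Set.MapsTo A p p') :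
    finrank K p ≤ finrank K p' :=
  LinearMap.finrank_le_finrank_of_injective (f := A.restrict h)
    fun _ _ hxy => Subtype.ext (hA (congrArg Subtype.val hxy))

theorem Module.End.finrank_eq_two_mul_finrank_eigenspace [FiniteDimensional K W] [NeZero (2 : K)]
    {J A : End K W} (hJ : J * J = -1) (hA : A * A = -1) (hJA : J * A = -(A * J))
    {μ : K} (hμ : μ * μ = -1) :
    finrank K W = 2 * finrank K (J.eigenspace μ) := by
  have hAinj : Function.Injective A := Function.LeftInverse.injective (g := -A) fun x => by
    simp [End.apply_apply_eq_neg_of_mul_self hA]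
  have hle := End.finrank_le_finrank_of_injective_of_mapsTo hAinj
    (End.mapsTo_eigenspace_neg_of_anticomm hJA μ)
  have hge := End.finrank_le_finrank_of_injective_of_mapsTo hAinj
    (neg_neg μ ▸ End.mapsTo_eigenspace_neg_of_anticomm hJA (-μ))
  have hsum := Submodule.finrank_add_eq_of_isCompl (End.isCompl_eigenspace_neg hJ hμ)
  omega

namespace IsCliffordFamily

theorem restrict {ι : Type*} {B : ι → End K W} (hB : IsCliffordFamily B) {p : Submodule K W}
    (hp : ∀ i, Set.MapsTo (B i) p p) : IsCliffordFamily fun i => (B i).restrict (hp i) where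
  mul_self i := LinearMap.ext fun x => Subtype.ext (LinearMap.congr_fun (hB.mul_self i) x)
  anticomm i j hij :=
    LinearMap.ext fun x => Subtype.ext (LinearMap.congr_fun (hB.anticomm i j hij) x)

theorem mul_succ_succ {m : ℕ} {B : Fin (m + 2) → End K W} (hB : IsCliffordFamily B) :
    IsCliffordFamily fun j : Fin m => B 1 * B j.succ.succ := by
  have hmul (j k : Fin m) :
      B 1 * B j.succ.succ * (B 1 * B k.succ.succ) = B j.succ.succ * B k.succ.succ :=
    calc B 1 * B j.succ.succ * (B 1 * B k.succ.succ)
        = B 1 * (B j.succ.succ * B 1) * B k.succ.succ := by noncomm_ring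
      _ = -(B 1 * B 1) * (B j.succ.succ * B k.succ.succ) := by
        rw [hB.anticomm _ _ (by simp [Fin.ext_iff])]; noncomm_ring
      _ = B j.succ.succ * B k.succ.succ := by rw [hB.mul_self]; noncomm_ring
  refine ⟨fun j => by rw [hmul, hB.mul_self], fun j k hjk => ?_⟩
  rw [hmul, hmul, hB.anticomm _ _ (by simpa using hjk)]

theorem commute_zero_mul_succ_succ {m : ℕ} {B : Fin (m + 2) → End K W} (hB : IsCliffordFamily B)
    (j : Fin m) : Commute (B 0) (B 1 * B j.succ.succ) :=
  calc B 0 * (B 1 * B j.succ.succ)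
      = -(B 1 * (B 0 * B j.succ.succ)) := by
        rw [← mul_assoc, hB.anticomm 0 1 (by simp)]; noncomm_ring
    _ = B 1 * B j.succ.succ * B 0 := by
      rw [hB.anticomm 0 _ (by simp [Fin.ext_iff])]; noncomm_ring

theorem exists_le_and_two_pow_dvd_finrank [IsAlgClosed K] [NeZero (2 : K)]
    [FiniteDimensional K W] {m : ℕ} {B : Fin m → End K W} (hB : IsCliffordFamily B) :
    ∃ a, m ≤ 2 * a + 1 ∧ 2 ^ a ∣ finrank K W := by
  induction m using Nat.strong_induction_on generalizing W with
  | _ m ih =>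
  match m, B, hB with
  | 0, _, _ | 1, _, _ => exact ⟨0, by omega, one_dvd _⟩
  | m + 2, B, hB =>
    obtain ⟨μ, hμ⟩ := IsAlgClosed.exists_eq_mul_self (-1 : K)
    obtain ⟨a, ha, hdvd⟩ := ih m (by omega) (hB.mul_succ_succ.restrict
      fun j => End.mapsTo_genEigenspace_of_comm (hB.commute_zero_mul_succ_succ j) μ 1)
    refine ⟨a + 1, by omega, ?_⟩
    rw [End.finrank_eq_two_mul_finrank_eigenspace (hB.mul_self 0) (hB.mul_self 1)
      (hB.anticomm 0 1 (by simp)) hμ.symm, pow_succ']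
    exact Nat.mul_dvd_mul_left 2 hdvd

end IsCliffordFamily

end Clifford

section Composition

variable {R U V W : Type*} [CommRing R] [AddCommGroup U] [Module R U] [AddCommGroup V]
  [Module R V] [AddCommGroup W] [Module R W]

def IsComposition (qU : QuadraticForm R U) (qV : QuadraticForm R V) (qW : QuadraticForm R W)
    (f : U →ₗ[R] V →ₗ[R] W) : Prop :=
  ∀ u v, qW (f u v) = qU u * qV v

namespace IsComposition

variable {qU : QuadraticForm R U} {qV : QuadraticForm R V} {qW : QuadraticForm R W}
  {f : U →ₗ[R] V →ₗ[R] W}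

theorem flip (hf : IsComposition qU qV qW f) : IsComposition qV qU qW f.flip :=
  fun v u => (hf u v).trans (mul_comm _ _)

theorem polar_apply_right (hf : IsComposition qU qV qW f) (u : U) (v v' : V) :
    polar qW (f u v) (f u v') = qU u * polar qV v v' := by
  simp only [polar, ← map_add, hf u]
  ring

theorem polar_apply_left (hf : IsComposition qU qV qW f) (u u' : U) (v : V) :
    polar qW (f u v) (f u' v) = polar qU u u' * qV v :=
  (hf.flip.polar_apply_right v u u').trans (mul_comm _ _)

theorem polar_add_polar (hf : IsComposition qU qV qW f) (u u' : U) (v v' : V) :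
    polar qW (f u v) (f u' v') + polar qW (f u v') (f u' v) = polar qU u u' * polar qV v v' := by
  have h := hf.polar_apply_left u u' (v + v')
  simp only [map_add, polar_add_left, polar_add_right, hf.polar_apply_left] at h
  rw [QuadraticMap.map_add qV] at h
  linear_combination h

end IsComposition

end Composition

theorem QuadraticMap.exists_ne_zero_of_separatingLeft {R V : Type*} [CommRing R]
    [AddCommGroup V] [Module R V] [Nontrivial V] {q : QuadraticForm R V}
    (hq : (polarBilin q).SeparatingLeft) : ∃ v, q v ≠ 0 := by
  by_contra! h
  obtain ⟨x, hx⟩ := exists_ne (0 : V)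
  exact hx (hq x fun y => by simp [polar, h])

section Field

variable {K U V W : Type*} [Field K] [AddCommGroup U] [Module K U] [AddCommGroup V]
  [Module K V] [AddCommGroup W] [Module K W]

theorem QuadraticForm.exists_orthonormal_family [IsAlgClosed K] [NeZero (2 : K)]
    [FiniteDimensional K V] {q : QuadraticForm K V} (hq : (polarBilin q).SeparatingLeft)
    {n : ℕ} (hn : finrank K V = n) :
    ∃ e : Fin n → V, (∀ i, q (e i) = 1) ∧ Pairwise fun i j => polar q (e i) (e j) = 0 := by
  subst hn
  have : Invertible (2 : K) := invertibleOfNonzero two_ne_zero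
  obtain ⟨v, hv⟩ := LinearMap.BilinForm.exists_orthogonal_basis (B := polarBilin q)
    (LinearMap.isSymm_def.mpr fun x y => polar_comm q x y)
  have hv0 (i) : q (v i) ≠ 0 := by
    intro hi
    have : polarBilin q (v i) = 0 := v.ext fun j => by
      rcases eq_or_ne i j with rfl | hij
      · simp [polar_self, hi]
      · exact hv hij
    exact v.ne_zero i (hq _ (LinearMap.congr_fun this))
  choose c hc using fun i => IsAlgClosed.exists_eq_mul_self (q (v i))⁻¹
  refine ⟨fun i => c i • v i, fun i => ?_, fun i j hij => ?_⟩
  · rw [QuadraticMap.map_smul, smul_eq_mul, ← hc i, inv_mul_cancel₀ (hv0 i)]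
  · simp only [polar_smul_left, polar_smul_right]
    rw [show polar q (v i) (v j) = 0 from hv hij, smul_zero, smul_zero]

namespace IsComposition

variable {qU : QuadraticForm K U} {qV : QuadraticForm K V} {qW : QuadraticForm K W}
  {f : U →ₗ[K] V →ₗ[K] W}

theorem injective_apply (hf : IsComposition qU qV qW f) (hV : (polarBilin qV).SeparatingLeft)
    {u : U} (hu : qU u ≠ 0) : Function.Injective (f u) := by
  rw [← LinearMap.ker_eq_bot, LinearMap.ker_eq_bot']
  intro v hv
  refine hV v fun v' => ?_
  have h := hf.polar_apply_right u v v'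
  rw [hv, polar_zero_left] at h
  exact (mul_eq_zero.mp h.symm).resolve_left hu

theorem finrank_le_right [Nontrivial U] [FiniteDimensional K W] (hf : IsComposition qU qV qW f)
    (hV : (polarBilin qV).SeparatingLeft) (hU : (polarBilin qU).SeparatingLeft) :
    finrank K V ≤ finrank K W :=
  let ⟨_, hu⟩ := QuadraticMap.exists_ne_zero_of_separatingLeft hU
  LinearMap.finrank_le_finrank_of_injective (hf.injective_apply hV hu)

theorem isCliffordFamily_of_rightInverse (hf : IsComposition qU qV qW f)
    (hV : (polarBilin qV).SeparatingLeft) {k : ℕ} {e : Fin (k + 1) → U}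
    (he : ∀ i, qU (e i) = 1) (he' : Pairwise fun i j => polar qU (e i) (e j) = 0)
    {N : W →ₗ[K] V} (hN : f (e (Fin.last k)) ∘ₗ N = LinearMap.id) :
    IsCliffordFamily fun j : Fin k => N ∘ₗ f (e j.castSucc) := by
  have hiso (i) (y y' : V) : polar qW (f (e i) y) (f (e i) y') = polar qV y y' := by
    rw [hf.polar_apply_right, he, one_mul]
  have hanti {i j} (hij : i ≠ j) (y y' : V) :
      polar qW (f (e i) y) (f (e j) y') = -polar qW (f (e i) y') (f (e j) y) := by
    rw [eq_neg_iff_add_eq_zero, hf.polar_add_polar, he' hij, zero_mul]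
  have hN' (w : W) : f (e (Fin.last k)) (N w) = w := LinearMap.congr_fun hN w
  have key (i : Fin k) (w : W) (z : V) :
      polar qV (N (f (e i.castSucc) (N w))) z = -polar qW (f (e i.castSucc) z) w := by
    rw [← hiso (Fin.last k), hN', hanti (Fin.castSucc_ne_last i), hN']
  have ext_polar {x y : V} (h : ∀ z, polar qV x z = polar qV y z) : x = y :=
    sub_eq_zero.mp (hV _ fun z => by simp [h z])
  refine ⟨fun i => LinearMap.ext fun x => ext_polar fun z => ?_,
    fun i j hij => LinearMap.ext fun x => ext_polar fun z => ?_⟩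
  · simp only [End.mul_apply, LinearMap.comp_apply, key, LinearMap.neg_apply,
      End.one_apply, polar_neg_left, hiso, polar_comm qV x z]
  · simp only [End.mul_apply, LinearMap.comp_apply, key, LinearMap.neg_apply,
      polar_neg_left, neg_neg]
    rw [hanti (Fin.castSucc_injective _ |>.ne hij.symm), polar_comm qW]

theorem exists_isCliffordFamily [FiniteDimensional K V] [FiniteDimensional K W]
    (hf : IsComposition qU qV qW f) (hV : (polarBilin qV).SeparatingLeft)
    (hdim : finrank K V = finrank K W) {k : ℕ} (e : Fin (k + 1) → U)
    (he : ∀ i, qU (e i) = 1) (he' : Pairwise fun i j => polar qU (e i) (e j) = 0) :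
    ∃ B : Fin k → End K V, IsCliffordFamily B := by
  have hinj := hf.injective_apply hV (u := e (Fin.last k)) (by simp [he])
  obtain ⟨N, hN⟩ := LinearMap.exists_rightInverse_of_surjective _ (LinearMap.range_eq_top.mpr
    ((LinearMap.injective_iff_surjective_of_finrank_eq_finrank hdim).mp hinj))
  exact ⟨_, hf.isCliffordFamily_of_rightInverse hV he he' hN⟩

end IsComposition

end Field

theorem mem_one_two_four_eight_of_two_pow_dvd {n a : ℕ} (hn : 0 < n) (hle : n ≤ 2 * a + 2)
    (hdvd : 2 ^ a ∣ n) : n ∈ ({1, 2, 4, 8} : Set ℕ) := by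
  have hpow (b : ℕ) (hb : 4 ≤ b) : 2 * b + 2 < 2 ^ b := by
    induction b, hb using Nat.le_induction with
    | base => norm_num
    | succ b _ ih => rw [pow_succ]; omega
  have ha : a ≤ 3 := by
    by_contra! ha
    have := Nat.le_of_dvd hn hdvd
    have := hpow a ha
    omega
  interval_cases a <;> interval_cases n <;> simp_all

theorem triality_hurwitz_general
    {V₁ V₂ V₃ : Type*}
    [AddCommGroup V₁] [Module ℂ V₁] [FiniteDimensional ℂ V₁]
    [AddCommGroup V₂] [Module ℂ V₂] [FiniteDimensional ℂ V₂] [Nontrivial V₂]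
    [AddCommGroup V₃] [Module ℂ V₃] [FiniteDimensional ℂ V₃] [Nontrivial V₃]
    (q₁ : QuadraticForm ℂ V₁) (q₂ : QuadraticForm ℂ V₂) (q₃ : QuadraticForm ℂ V₃)
    (hn₁ : ∀ x : V₁, (∀ y : V₁, polar q₁ x y = 0) → x = 0)
    (hn₂ : ∀ x : V₂, (∀ y : V₂, polar q₂ x y = 0) → x = 0)
    (hn₃ : ∀ x : V₃, (∀ y : V₃, polar q₃ x y = 0) → x = 0)
    (t₁ : V₂ →ₗ[ℂ] V₃ →ₗ[ℂ] V₁)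
    (t₂ : V₁ →ₗ[ℂ] V₃ →ₗ[ℂ] V₂)
    (t₃ : V₁ →ₗ[ℂ] V₂ →ₗ[ℂ] V₃)
    (ho₁ : ∀ (v₂ : V₂) (v₃ : V₃), q₁ (t₁ v₂ v₃) = q₂ v₂ * q₃ v₃)
    (ho₂ : ∀ (v₁ : V₁) (v₃ : V₃), q₂ (t₂ v₁ v₃) = q₁ v₁ * q₃ v₃)
    (ho₃ : ∀ (v₁ : V₁) (v₂ : V₂), q₃ (t₃ v₁ v₂) = q₁ v₁ * q₂ v₂) :
    Module.finrank ℂ V₁ = Module.finrank ℂ V₂ ∧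
    Module.finrank ℂ V₂ = Module.finrank ℂ V₃ ∧
    Module.finrank ℂ V₁ ∈ ({1, 2, 4, 8} : Set ℕ) := by
  have h₁ : IsComposition q₂ q₃ q₁ t₁ := ho₁
  have h₂ : IsComposition q₁ q₃ q₂ t₂ := ho₂
  have h₃ : IsComposition q₁ q₂ q₃ t₃ := ho₃
  have h₁₂ : finrank ℂ V₁ = finrank ℂ V₂ :=
    le_antisymm (h₂.flip.finrank_le_right hn₁ hn₃) (h₁.flip.finrank_le_right hn₂ hn₃)
  have h₁₃ : finrank ℂ V₁ = finrank ℂ V₃ :=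
    le_antisymm (h₃.flip.finrank_le_right hn₁ hn₂) (h₁.finrank_le_right hn₃ hn₂)
  obtain ⟨k, hk⟩ := Nat.exists_eq_succ_of_ne_zero (finrank_pos (R := ℂ) (M := V₂)).ne'
  obtain ⟨e, he, he'⟩ := QuadraticForm.exists_orthonormal_family hn₂ hk
  obtain ⟨B, hB⟩ := h₁.exists_isCliffordFamily hn₃ h₁₃.symm e he he'
  obtain ⟨a, ha, hdvd⟩ := hB.exists_le_and_two_pow_dvd_finrank
  refine ⟨h₁₂, h₁₂ ▸ h₁₃, ?_⟩
  rw [h₁₃]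
  exact mem_one_two_four_eight_of_two_pow_dvd finrank_pos (by omega) hdvd

/-- Hurwitz's theorem: the common dimension of the three spaces of a triality over ℂ
is 1, 2, 4 or 8. -/
theorem triality_hurwitz
    {V₁ V₂ V₃ : Type*}
    [AddCommGroup V₁] [Module ℂ V₁] [FiniteDimensional ℂ V₁] [Nontrivial V₁]
    [AddCommGroup V₂] [Module ℂ V₂] [FiniteDimensional ℂ V₂] [Nontrivial V₂]
    [AddCommGroup V₃] [Module ℂ V₃] [FiniteDimensional ℂ V₃] [Nontrivial V₃]
    (q₁ : QuadraticForm ℂ V₁) (q₂ : QuadraticForm ℂ V₂) (q₃ : QuadraticForm ℂ V₃)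
    (hn₁ : ∀ x : V₁, (∀ y : V₁, polar q₁ x y = 0) → x = 0)
    (hn₂ : ∀ x : V₂, (∀ y : V₂, polar q₂ x y = 0) → x = 0)
    (hn₃ : ∀ x : V₃, (∀ y : V₃, polar q₃ x y = 0) → x = 0)
    (t₁ : V₂ →ₗ[ℂ] V₃ →ₗ[ℂ] V₁)
    (t₂ : V₁ →ₗ[ℂ] V₃ →ₗ[ℂ] V₂)
    (t₃ : V₁ →ₗ[ℂ] V₂ →ₗ[ℂ] V₃)
    (hT₁₂ : ∀ (v₁ : V₁) (v₂ : V₂) (v₃ : V₃),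
      polar q₁ (t₁ v₂ v₃) v₁ = polar q₂ (t₂ v₁ v₃) v₂)
    (hT₂₃ : ∀ (v₁ : V₁) (v₂ : V₂) (v₃ : V₃),
      polar q₂ (t₂ v₁ v₃) v₂ = polar q₃ (t₃ v₁ v₂) v₃)
    (ho₁ : ∀ (v₂ : V₂) (v₃ : V₃), q₁ (t₁ v₂ v₃) = q₂ v₂ * q₃ v₃)
    (ho₂ : ∀ (v₁ : V₁) (v₃ : V₃), q₂ (t₂ v₁ v₃) = q₁ v₁ * q₃ v₃)
    (ho₃ : ∀ (v₁ : V₁) (v₂ : V₂), q₃ (t₃ v₁ v₂) = q₁ v₁ * q₂ v₂) :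
    Module.finrank ℂ V₁ = Module.finrank ℂ V₂ ∧
    Module.finrank ℂ V₂ = Module.finrank ℂ V₃ ∧
    Module.finrank ℂ V₁ ∈ ({1, 2, 4, 8} : Set ℕ) :=
  triality_hurwitz_general q₁ q₂ q₃ hn₁ hn₂ hn₃ t₁ t₂ t₃ ho₁ ho₂ ho₃
end

section
/- Let (t₁,t₂,t₃) be a triality on (V₁,q₁), (V₂,q₂), (V₃,q₃). Fix v₁ ∈ V₁ with q₁(v₁) = 1 and x₁ ∈ V₂ with q₂(x₁) = 1, and set y₁ := t₃(v₁,x₁) ∈ V₃. Let R : V₁ → V₁ be the reflection R(v) := v − b₁(v₁,v) • v₁. Then: (0) q₃(y₁) = 1 and t₂(v₁, y₁) = x₁; (a) t₂(v₁, t₃(v, x₁)) = −t₂(R(v), y₁) for all v ∈ V₁; (b) t₃(v₁, t₂(v, y₁)) = −t₃(R(v), x₁) for all v ∈ V₁; (c) t₁(t₂(v₁,y), t₃(v₁,x)) = −R(t₁(x,y)) for all x ∈ V₂ and y ∈ V₃. -/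
open QuadraticMap

/-- The reflection identities used in the construction of the order-3 triality
automorphism (Lemma 3.1). Fix unit vectors `v₁ ∈ V₁`, `x₁ ∈ V₂`, put
`y₁ := t₃(v₁, x₁)` and let `R` be the reflection of `V₁` across the hyperplane
orthogonal to `v₁`. Then `q₃(y₁) = 1`, `t₂(v₁, y₁) = x₁`, and the three twisted
identities (a), (b), (c) hold. -/
theorem triality_reflection_identities
    {V₁ V₂ V₃ : Type*}
    [AddCommGroup V₁] [Module ℂ V₁] [FiniteDimensional ℂ V₁] [Nontrivial V₁]
    [AddCommGroup V₂] [Module ℂ V₂] [FiniteDimensional ℂ V₂] [Nontrivial V₂]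
    [AddCommGroup V₃] [Module ℂ V₃] [FiniteDimensional ℂ V₃] [Nontrivial V₃]
    (q₁ : QuadraticForm ℂ V₁) (q₂ : QuadraticForm ℂ V₂) (q₃ : QuadraticForm ℂ V₃)
    (hn₁ : ∀ x : V₁, (∀ y : V₁, polar q₁ x y = 0) → x = 0)
    (hn₂ : ∀ x : V₂, (∀ y : V₂, polar q₂ x y = 0) → x = 0)
    (hn₃ : ∀ x : V₃, (∀ y : V₃, polar q₃ x y = 0) → x = 0)
    (t₁ : V₂ →ₗ[ℂ] V₃ →ₗ[ℂ] V₁)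
    (t₂ : V₁ →ₗ[ℂ] V₃ →ₗ[ℂ] V₂)
    (t₃ : V₁ →ₗ[ℂ] V₂ →ₗ[ℂ] V₃)
    (hT₁₂ : ∀ (v₁ : V₁) (v₂ : V₂) (v₃ : V₃),
      polar q₁ (t₁ v₂ v₃) v₁ = polar q₂ (t₂ v₁ v₃) v₂)
    (hT₂₃ : ∀ (v₁ : V₁) (v₂ : V₂) (v₃ : V₃),
      polar q₂ (t₂ v₁ v₃) v₂ = polar q₃ (t₃ v₁ v₂) v₃)
    (ho₁ : ∀ (v₂ : V₂) (v₃ : V₃), q₁ (t₁ v₂ v₃) = q₂ v₂ * q₃ v₃)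
    (ho₂ : ∀ (v₁ : V₁) (v₃ : V₃), q₂ (t₂ v₁ v₃) = q₁ v₁ * q₃ v₃)
    (ho₃ : ∀ (v₁ : V₁) (v₂ : V₂), q₃ (t₃ v₁ v₂) = q₁ v₁ * q₂ v₂) :
    ∀ (v₁ : V₁) (x₁ : V₂), q₁ v₁ = 1 → q₂ x₁ = 1 →
      q₃ (t₃ v₁ x₁) = 1 ∧
      t₂ v₁ (t₃ v₁ x₁) = x₁ ∧
      (∀ v : V₁, t₂ v₁ (t₃ v x₁) = - t₂ (v - polar q₁ v₁ v • v₁) (t₃ v₁ x₁)) ∧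
      (∀ v : V₁, t₃ v₁ (t₂ v (t₃ v₁ x₁)) = - t₃ (v - polar q₁ v₁ v • v₁) x₁) ∧
      (∀ (x : V₂) (y : V₃), t₁ (t₂ v₁ y) (t₃ v₁ x) =
        - (t₁ x y - polar q₁ v₁ (t₁ x y) • v₁)) := by
  -- polarization of ho₂ in the V₃ variable
  have h1 : ∀ (v : V₁) (z z' : V₃),
      polar q₂ (t₂ v z) (t₂ v z') = q₁ v * polar q₃ z z' := by
    intro v z z'
    simp only [polar, ← map_add, ho₂]
    ring
  -- polarization of ho₃ in the V₂ variable
  have h1' : ∀ (v : V₁) (x x' : V₂),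
      polar q₃ (t₃ v x) (t₃ v x') = q₁ v * polar q₂ x x' := by
    intro v x x'
    simp only [polar, ← map_add, ho₃]
    ring
  -- composition identities
  have h2 : ∀ (v : V₁) (x : V₂), t₂ v (t₃ v x) = q₁ v • x := by
    intro v x
    have h := hn₂ (t₂ v (t₃ v x) - q₁ v • x) (fun x₂ => by
      rw [polar_sub_left, polar_smul_left, hT₂₃ v x₂ (t₃ v x), polar_comm _ _ (t₃ v x),
        h1' v x x₂]
      simp [smul_eq_mul])
    exact sub_eq_zero.mp h
  have h3 : ∀ (v : V₁) (y : V₃), t₃ v (t₂ v y) = q₁ v • y := by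
    intro v y
    have h := hn₃ (t₃ v (t₂ v y) - q₁ v • y) (fun y₃ => by
      rw [polar_sub_left, polar_smul_left, ← hT₂₃ v (t₂ v y) y₃, polar_comm _ _ (t₂ v y),
        h1 v y y₃]
      simp [smul_eq_mul])
    exact sub_eq_zero.mp h
  -- polarizations in v
  have h2lin : ∀ (u w : V₁) (x : V₂),
      t₂ u (t₃ w x) + t₂ w (t₃ u x) = polar q₁ u w • x := by
    intro u w x
    have h := h2 (u + w) x
    simp only [map_add, LinearMap.add_apply] at h
    rw [h2 u x, h2 w x] at h
    have : t₂ u (t₃ w x) + t₂ w (t₃ u x)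
        = (q₁ (u + w) - q₁ u - q₁ w) • x := by
      rw [sub_smul, sub_smul, ← h]; abel
    rw [this]; rfl
  have h3lin : ∀ (u w : V₁) (y : V₃),
      t₃ u (t₂ w y) + t₃ w (t₂ u y) = polar q₁ u w • y := by
    intro u w y
    have h := h3 (u + w) y
    simp only [map_add, LinearMap.add_apply] at h
    rw [h3 u y, h3 w y] at h
    have : t₃ u (t₂ w y) + t₃ w (t₂ u y)
        = (q₁ (u + w) - q₁ u - q₁ w) • y := by
      rw [sub_smul, sub_smul, ← h]; abel
    rw [this]; rfl
  -- polarization of h1 in v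
  have hbil : ∀ (u w : V₁) (z z' : V₃),
      polar q₂ (t₂ u z) (t₂ w z') + polar q₂ (t₂ w z) (t₂ u z')
        = polar q₁ u w * polar q₃ z z' := by
    intro u w z z'
    have h := h1 (u + w) z z'
    simp only [map_add, LinearMap.add_apply, polar_add_left, polar_add_right] at h
    rw [h1 u z z', h1 w z z'] at h
    have hq : q₁ (u + w) = q₁ u + q₁ w + polar q₁ u w := by
      simp only [polar]; ring
    rw [hq] at h
    linear_combination h
  -- the t₁ identity
  have h4 : ∀ (v : V₁) (x : V₂) (y : V₃),
      t₁ (t₂ v y) (t₃ v x) = polar q₁ (t₁ x y) v • v - q₁ v • t₁ x y := by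
    intro v x y
    have key : ∀ w : V₁, polar q₁ (t₁ (t₂ v y) (t₃ v x)) w
        = polar q₁ w v * polar q₁ (t₁ x y) v - q₁ v * polar q₁ (t₁ x y) w := by
      intro w
      have hb := hbil w v (t₃ v x) y
      rw [h2 v x] at hb
      have e1 : polar q₃ (t₃ v x) y = polar q₁ (t₁ x y) v := by
        rw [← hT₂₃ v x y, ← hT₁₂ v x y]
      have e2 : polar q₂ (q₁ v • x) (t₂ w y) = q₁ v * polar q₁ (t₁ x y) w := by
        rw [polar_smul_left, smul_eq_mul, polar_comm q₂ x (t₂ w y), ← hT₁₂ w x y]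
      rw [hT₁₂ w (t₂ v y) (t₃ v x)]
      rw [e1, e2] at hb
      linear_combination hb
    have h := hn₁ (t₁ (t₂ v y) (t₃ v x) - (polar q₁ (t₁ x y) v • v - q₁ v • t₁ x y))
      (fun w => by
        rw [polar_sub_left, key w, polar_sub_left, polar_smul_left, polar_smul_left,
          polar_comm q₁ v w, smul_eq_mul, smul_eq_mul]
        ring)
    exact sub_eq_zero.mp h
  intro v₁ x₁ hq1 hq2
  refine ⟨by rw [ho₃, hq1, hq2, one_mul], by rw [h2, hq1, one_smul], ?_, ?_, ?_⟩
  · intro v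
    have h := h2lin v₁ v x₁
    rw [_root_.map_sub, _root_.map_smul, LinearMap.sub_apply, LinearMap.smul_apply,
      h2 v₁ x₁, hq1, one_smul, ← h]
    abel
  · intro v
    have h := h3lin v₁ v (t₃ v₁ x₁)
    rw [h2 v₁ x₁, hq1, one_smul] at h
    rw [_root_.map_sub, _root_.map_smul, LinearMap.sub_apply, LinearMap.smul_apply, ← h]
    abel
  · intro x y
    rw [h4 v₁ x y, hq1, one_smul, polar_comm q₁ (t₁ x y) v₁]
    abel
end

section
/- For all trace-zero 3×3 complex matrices x and y, the Okubo product x ⋆ y again has trace zero, and the Okubo norm is multiplicative: n(x ⋆ y) = n(x)·n(y). -/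
open Matrix

/-- The primitive cube root of unity `ω = exp(2πi/3)`. -/
noncomputable def okuboOmega : ℂ := Complex.exp (2 * Real.pi * Complex.I / 3)

/-- `μ = (1 − ω)/3`. -/
noncomputable def okuboMu : ℂ := (1 - okuboOmega) / 3

/-- The Okubo product on 3×3 complex matrices:
`x ⋆ y = μ·(xy) + (1−μ)·(yx) − (1/3)·tr(xy)·I`. -/
noncomputable def okuboMul (x y : Matrix (Fin 3) (Fin 3) ℂ) : Matrix (Fin 3) (Fin 3) ℂ :=
  okuboMu • (x * y) + (1 - okuboMu) • (y * x) - ((1 / 3 : ℂ) * (x * y).trace) • (1 : Matrix (Fin 3) (Fin 3) ℂ)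

/-- The Okubo norm `n(x) = (1/6)·tr(x²)`. -/
noncomputable def okuboNorm (x : Matrix (Fin 3) (Fin 3) ℂ) : ℂ := (1 / 6 : ℂ) * (x * x).trace

/-! For `a = xy` and `b = yx` we have `tr a = tr b` and `tr a² = tr b²`, so expanding the square of
`x ⋆ y = μ a + (1 − μ) b − (tr a / 3) I` leaves `tr (x ⋆ y)² = (tr a² + 2 tr ab − (tr a)²) / 3`,
using only `μ (1 − μ) = 1/3`, i.e. `ω² + ω + 1 = 0`. Multiplicativity of `n` then reduces to a
polynomial identity between traces of trace-zero `3 × 3` matrices. -/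

lemma okuboOmega_sq_add_self_add_one : okuboOmega ^ 2 + okuboOmega + 1 = 0 := by
  have h := (Complex.isPrimitiveRoot_exp 3 (by norm_num)).geom_sum_eq_zero (by norm_num)
  simp only [Finset.sum_range_succ, Finset.sum_range_zero, Nat.cast_ofNat] at h
  rw [okuboOmega]
  linear_combination h

lemma okuboMu_mul_one_sub_okuboMu : okuboMu * (1 - okuboMu) = 1 / 3 := by
  rw [okuboMu]
  linear_combination (-1 / 9 : ℂ) * okuboOmega_sq_add_self_add_one

lemma trace_okuboMul (x y : Matrix (Fin 3) (Fin 3) ℂ) : (okuboMul x y).trace = 0 := by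
  simp only [okuboMul, trace_sub, trace_add, trace_smul, trace_one, smul_eq_mul, Fintype.card_fin,
    trace_mul_comm y x]
  ring

lemma trace_okuboMul_mul_self (x y : Matrix (Fin 3) (Fin 3) ℂ) :
    (okuboMul x y * okuboMul x y).trace =
      ((x * y * (x * y)).trace + 2 * (x * y * (y * x)).trace - (x * y).trace ^ 2) / 3 := by
  have h_sq : (y * x * (y * x)).trace = (x * y * (x * y)).trace := by
    rw [show y * x * (y * x) = y * (x * y) * x by noncomm_ring, trace_mul_cycle]
  simp only [okuboMul, sub_mul, mul_sub, add_mul, mul_add, smul_mul_assoc, mul_smul_comm,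
    mul_one, one_mul, trace_sub, trace_add, trace_smul, trace_one, smul_eq_mul,
    Fintype.card_fin]
  rw [h_sq, trace_mul_comm (y * x) (x * y), trace_mul_comm y x]
  linear_combination (2 * (x * y * (y * x)).trace - 2 * (x * y * (x * y)).trace) *
    okuboMu_mul_one_sub_okuboMu

lemma trace_mul_self_mul_trace_mul_self_of_trace_eq_zero {R : Type*} [CommRing R]
    {x y : Matrix (Fin 3) (Fin 3) R} (hx : x.trace = 0) (hy : y.trace = 0) :
    (x * x).trace * (y * y).trace =
      2 * (x * y * (x * y)).trace + 4 * (x * y * (y * x)).trace - 2 * (x * y).trace ^ 2 := by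
  rw [trace_fin_three] at hx hy
  simp only [trace_fin_three, mul_apply, Fin.sum_univ_three]
  rw [eq_neg_of_add_eq_zero_right hx, eq_neg_of_add_eq_zero_right hy]
  ring

/-- The Okubo product of two trace-zero matrices is trace-zero, and the Okubo norm is
multiplicative on trace-zero matrices. -/
theorem okubo_trace_zero_and_norm_mul
    (x y : Matrix (Fin 3) (Fin 3) ℂ) (hx : x.trace = 0) (hy : y.trace = 0) :
    (okuboMul x y).trace = 0 ∧ okuboNorm (okuboMul x y) = okuboNorm x * okuboNorm y := by
  refine ⟨trace_okuboMul x y, ?_⟩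
  rw [okuboNorm, okuboNorm, okuboNorm, trace_okuboMul_mul_self,
    mul_mul_mul_comm, trace_mul_self_mul_trace_mul_self_of_trace_eq_zero hx hy]
  ring
end

section
/- For all trace-zero 3×3 complex matrices x, y, z one has tr((x ⋆ y)*z) = tr(x*(y ⋆ z)) = tr(y*(z ⋆ x)). Equivalently, the bilinear form b_n(x,y) := (1/3)·tr(x*y) is associative with respect to the Okubo product: b_n(x ⋆ y, z) = b_n(x, y ⋆ z). -/
open Matrix

/-- Cyclic symmetry of the trilinear form `tr((x ⋆ y) z)` attached to the Okubo product,
and associativity of the bilinear form `b_n(x,y) = (1/3)·tr(xy)` with respect to `⋆`. -/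
theorem okubo_trace_cyclic_and_bn_associative
    (x y z : Matrix (Fin 3) (Fin 3) ℂ)
    (hx : x.trace = 0) (hy : y.trace = 0) (hz : z.trace = 0) :
    (okuboMul x y * z).trace = (x * okuboMul y z).trace ∧
    (x * okuboMul y z).trace = (y * okuboMul z x).trace ∧
    (1 / 3 : ℂ) * (okuboMul x y * z).trace = (1 / 3 : ℂ) * (x * okuboMul y z).trace := by
  have key : ∀ a b c : Matrix (Fin 3) (Fin 3) ℂ, a.trace = 0 → c.trace = 0 →
      (okuboMul a b * c).trace = okuboMu * (a * b * c).trace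
        + (1 - okuboMu) * (b * a * c).trace ∧
      (a * okuboMul b c).trace = okuboMu * (a * (b * c)).trace
        + (1 - okuboMu) * (a * (c * b)).trace := by
    intro a b c ha hc
    constructor
    · simp [okuboMul, sub_mul, add_mul, Matrix.trace_smul, Matrix.trace_add,
        Matrix.trace_sub, smul_mul_assoc, hc, smul_eq_mul]
    · simp [okuboMul, mul_sub, mul_add, Matrix.trace_smul, Matrix.trace_add,
        Matrix.trace_sub, mul_smul_comm, ha, smul_eq_mul]
  obtain ⟨h1, h2⟩ := key x y z hx hz
  obtain ⟨_, h4⟩ := key y z x hy hx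
  have e1 : (okuboMul x y * z).trace = (x * okuboMul y z).trace := by
    rw [h1, h2, ← mul_assoc x y, ← mul_assoc x z, Matrix.trace_mul_cycle x z y]
  have e2 : (x * okuboMul y z).trace = (y * okuboMul z x).trace := by
    rw [h2, h4, Matrix.trace_mul_comm x (y*z), mul_assoc,
      Matrix.trace_mul_comm y (x*z), mul_assoc]
  exact ⟨e1, e2, by rw [e1]⟩
end

section
/- For every m ≥ 1, there exists a ℂ-algebra isomorphism from the Clifford algebra CliffordAlgebra Q of the quadratic form Q on ℂ^(2m) to the full matrix algebra Matrix (Fin 2^m) (Fin 2^m) ℂ. (This is the statement that the Clifford algebra of a nondegenerate quadratic form on an even-dimensional complex space is isomorphic to the endomorphism algebra of the 2^m-dimensional spinor module ⋀•W, for W a maximal totally isotropic subspace.) -/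
/-!
Write `v ∈ ℂ^(n+2)` as `(v', b, c)` with `v' ∈ ℂ^n`. The null coordinates `s = b + ic`,
`t = -b + ic` satisfy `st = -b² - c²`, so `Q(v) = Q(v') + st` and the block matrix
`[[ι v', s], [t, -ι v']]` squares to `Q(v)`. This gives an algebra map `Cl_{n+2} → M₂(Cl_n)`.
Its image contains the two off-diagonal matrix units and, on `Cl_n ⊆ Cl_{n+2}`, it is
`x ↦ diag(x, involute x)`; hence it is onto, and since `dim Cl_k = 2^k` it is an isomorphism.
Starting from `Cl_0 = ℂ`, induction gives `Cl_{2m} ≅ M_{2^m}(ℂ)`.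
-/

open CliffordAlgebra Matrix Module

noncomputable section

theorem Matrix.subalgebra_eq_top_of_single_one_mem {R A ι : Type*} [CommSemiring R]
    [Semiring A] [Algebra R A] [Fintype ι] [DecidableEq ι] (S : Subalgebra R (Matrix ι ι A))
    (hsingle : ∀ i j, single i j (1 : A) ∈ S) (i₀ : ι) (hcorner : ∀ x, ∃ M ∈ S, M i₀ i₀ = x) :
    S = ⊤ := by
  refine eq_top_iff.2 fun M _ => ?_
  rw [matrix_eq_sum_single M]
  refine Subalgebra.sum_mem _ fun i _ => Subalgebra.sum_mem _ fun j _ => ?_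
  obtain ⟨N, hN, hNx⟩ := hcorner (M i j)
  have hsandwich : single i j (M i j) = single i i₀ 1 * N * single i₀ j 1 := by
    rw [single_mul_mul_single, one_mul, mul_one, hNx]
  exact hsandwich ▸ S.mul_mem (S.mul_mem (hsingle i i₀) hN) (hsingle i₀ j)

theorem Matrix.subalgebra_fin_two_eq_top {R A : Type*} [CommSemiring R] [Semiring A]
    [Algebra R A] (S : Subalgebra R (Matrix (Fin 2) (Fin 2) A))
    (h01 : !![0, 1; 0, 0] ∈ S) (h10 : !![0, 0; 1, 0] ∈ S) (hcorner : ∀ x, ∃ M ∈ S, M 0 0 = x) :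
    S = ⊤ := by
  have e01 : single 0 1 (1 : A) = !![0, 1; 0, 0] := by
    ext i j; fin_cases i <;> fin_cases j <;> simp
  have e10 : single 1 0 (1 : A) = !![0, 0; 1, 0] := by
    ext i j; fin_cases i <;> fin_cases j <;> simp
  rw [← e01] at h01
  rw [← e10] at h10
  refine subalgebra_eq_top_of_single_one_mem S (fun i j => ?_) 0 hcorner
  fin_cases i <;> fin_cases j
  · simpa using S.mul_mem h01 h10
  · exact h01
  · exact h10
  · simpa using S.mul_mem h10 h01

section FiniteDimensional

variable {K M : Type*} [Field K] [Invertible (2 : K)] [AddCommGroup M] [Module K M]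
  [FiniteDimensional K M] (Q : QuadraticForm K M)

instance CliffordAlgebra.instFiniteDimensional : FiniteDimensional K (CliffordAlgebra Q) :=
  have := Module.Finite.of_basis (finBasis K M).ExteriorAlgebra
  Module.Finite.equiv (equivExterior Q).symm

theorem CliffordAlgebra.finrank_eq_two_pow :
    finrank K (CliffordAlgebra Q) = 2 ^ finrank K M := by
  rw [(equivExterior Q).finrank_eq, finrank_eq_card_basis (finBasis K M).ExteriorAlgebra,
    Fintype.card_finset, Fintype.card_fin]

end FiniteDimensional

abbrev negSumSquares (n : ℕ) : QuadraticForm ℂ (Fin n → ℂ) :=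
  QuadraticMap.weightedSumSquares ℂ (fun _ : Fin n => (-1 : ℂ))

namespace negSumSquares

variable (n : ℕ)

def truncate : (Fin (n + 2) → ℂ) →ₗ[ℂ] (Fin n → ℂ) :=
  LinearMap.funLeft ℂ ℂ (Fin.castAdd 2)

def nullCoordFst : (Fin (n + 2) → ℂ) →ₗ[ℂ] ℂ :=
  LinearMap.proj (Fin.natAdd n 0) + Complex.I • LinearMap.proj (Fin.natAdd n 1)

def nullCoordSnd : (Fin (n + 2) → ℂ) →ₗ[ℂ] ℂ :=
  -LinearMap.proj (Fin.natAdd n 0) + Complex.I • LinearMap.proj (Fin.natAdd n 1)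

@[simp] theorem truncate_append (w : Fin n → ℂ) (x : Fin 2 → ℂ) :
    truncate n (Fin.append w x) = w := by
  ext i; simp [truncate]

@[simp] theorem nullCoordFst_append (w : Fin n → ℂ) (x : Fin 2 → ℂ) :
    nullCoordFst n (Fin.append w x) = x 0 + Complex.I * x 1 := by
  simp [nullCoordFst]

@[simp] theorem nullCoordSnd_append (w : Fin n → ℂ) (x : Fin 2 → ℂ) :
    nullCoordSnd n (Fin.append w x) = -x 0 + Complex.I * x 1 := by
  simp [nullCoordSnd]

theorem apply_add_two (v : Fin (n + 2) → ℂ) :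
    negSumSquares (n + 2) v =
      negSumSquares n (truncate n v) + nullCoordFst n v * nullCoordSnd n v := by
  simp only [QuadraticMap.weightedSumSquares_apply, Fin.sum_univ_add, Fin.sum_univ_two,
    nullCoordFst, nullCoordSnd, truncate, LinearMap.funLeft_apply, smul_eq_mul,
    LinearMap.add_apply, LinearMap.neg_apply, LinearMap.smul_apply, LinearMap.proj_apply]
  linear_combination -(v (Fin.natAdd n 1)) ^ 2 * Complex.I_sq

def embedding : (negSumSquares n).Isometry (negSumSquares (n + 2)) where
  toFun w := Fin.append w 0
  map_add' u w := by ext i; refine Fin.addCases (fun _ => ?_) (fun _ => ?_) i <;> simp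
  map_smul' c w := by ext i; refine Fin.addCases (fun _ => ?_) (fun _ => ?_) i <;> simp
  map_app' w := by rw [apply_add_two]; simp

@[simp] theorem embedding_apply (w : Fin n → ℂ) : embedding n w = Fin.append w 0 := rfl

def blockMap :
    (Fin (n + 2) → ℂ) →ₗ[ℂ] Matrix (Fin 2) (Fin 2) (CliffordAlgebra (negSumSquares n)) where
  toFun v := !![ι _ (truncate n v), algebraMap ℂ _ (nullCoordFst n v);
    algebraMap ℂ _ (nullCoordSnd n v), -ι _ (truncate n v)]
  map_add' u v := by
    ext i j
    fin_cases i <;> fin_cases j <;> simp [add_comm]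
  map_smul' c v := by
    simp only [map_smul]
    ext i j
    fin_cases i <;> fin_cases j <;> simp [Algebra.smul_def]

theorem blockMap_mul_self (v : Fin (n + 2) → ℂ) :
    blockMap n v * blockMap n v = algebraMap ℂ _ (negSumSquares (n + 2) v) := by
  have hscalar (r : ℂ) :
      algebraMap ℂ (Matrix (Fin 2) (Fin 2) (CliffordAlgebra (negSumSquares n))) r =
        !![algebraMap ℂ _ r, 0; 0, algebraMap ℂ _ r] := by
    ext i j; fin_cases i <;> fin_cases j <;> rfl
  rw [hscalar, apply_add_two, map_add, map_mul, ← ι_sq_scalar]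
  simp only [blockMap, LinearMap.coe_mk, AddHom.coe_mk, mul_fin_two, mul_neg, neg_mul, neg_neg,
    Algebra.commutes, ← map_mul, mul_comm (nullCoordSnd n v), add_neg_cancel,
    add_comm (ι _ _ * ι _ _)]

def periodicityHom : CliffordAlgebra (negSumSquares (n + 2)) →ₐ[ℂ]
    Matrix (Fin 2) (Fin 2) (CliffordAlgebra (negSumSquares n)) :=
  lift _ ⟨blockMap n, blockMap_mul_self n⟩

theorem periodicityHom_ι_append (w : Fin n → ℂ) (σ τ : ℂ) :
    periodicityHom n (ι _ (Fin.append w ![(σ - τ) / 2, -Complex.I * (σ + τ) / 2])) =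
      !![ι _ w, algebraMap ℂ _ σ; algebraMap ℂ _ τ, -ι _ w] := by
  have hσ : (σ - τ) / 2 + Complex.I * (-Complex.I * (σ + τ) / 2) = σ := by
    linear_combination (-(σ + τ) / 2) * Complex.I_sq
  have hτ : -((σ - τ) / 2) + Complex.I * (-Complex.I * (σ + τ) / 2) = τ := by
    linear_combination (-(σ + τ) / 2) * Complex.I_sq
  simp only [periodicityHom, lift_ι_apply, blockMap, LinearMap.coe_mk, AddHom.coe_mk,
    truncate_append, nullCoordFst_append, nullCoordSnd_append, cons_val_zero, cons_val_one,
    cons_val_fin_one, hσ, hτ]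

theorem periodicityHom_comp_map_embedding :
    (periodicityHom n).comp (map (embedding n)) =
      (diagonalAlgHom ℂ).comp (AlgHom.pi ![AlgHom.id ℂ _, involute]) := by
  refine hom_ext (LinearMap.ext fun w => ?_)
  have hzero : ![(0 - 0) / 2, -Complex.I * (0 + 0) / 2] = (0 : Fin 2 → ℂ) := by
    ext i; fin_cases i <;> simp
  have hw := periodicityHom_ι_append n w 0 0
  rw [hzero] at hw
  ext i j
  fin_cases i <;> fin_cases j <;> simp [hw]

theorem periodicityHom_map_embedding (x : CliffordAlgebra (negSumSquares n)) :
    periodicityHom n (map (embedding n) x) = diagonal ![x, involute x] := by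
  have hx := AlgHom.congr_fun (periodicityHom_comp_map_embedding n) x
  rw [AlgHom.comp_apply] at hx
  rw [hx]
  ext i j
  fin_cases i <;> fin_cases j <;> simp

theorem periodicityHom_surjective : Function.Surjective (periodicityHom n) := by
  refine (AlgHom.range_eq_top _).1 (Matrix.subalgebra_fin_two_eq_top _ ?_ ?_ fun x => ?_)
  · exact ⟨_, by simpa using periodicityHom_ι_append n 0 1 0⟩
  · exact ⟨_, by simpa using periodicityHom_ι_append n 0 0 1⟩
  · exact ⟨_, ⟨map (embedding n) x, rfl⟩, by simp [periodicityHom_map_embedding]⟩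

def periodicityEquiv : CliffordAlgebra (negSumSquares (n + 2)) ≃ₐ[ℂ]
    Matrix (Fin 2) (Fin 2) (CliffordAlgebra (negSumSquares n)) :=
  have hrank : finrank ℂ (CliffordAlgebra (negSumSquares (n + 2))) =
      finrank ℂ (Matrix (Fin 2) (Fin 2) (CliffordAlgebra (negSumSquares n))) := by
    simp only [finrank_matrix, CliffordAlgebra.finrank_eq_two_pow, finrank_fin_fun,
      Fintype.card_fin]
    ring
  AlgEquiv.ofBijective (periodicityHom n)
    ⟨(LinearMap.injective_iff_surjective_of_finrank_eq_finrank
      (f := (periodicityHom n).toLinearMap) hrank).2 (periodicityHom_surjective n),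
      periodicityHom_surjective n⟩

end negSumSquares

theorem cliffordAlgebra_even_dim_iso_matrix_general (m : ℕ) :
    Nonempty
      (CliffordAlgebra
          (QuadraticMap.weightedSumSquares ℂ (fun _ : Fin (2 * m) => (-1 : ℂ))) ≃ₐ[ℂ]
        Matrix (Fin (2 ^ m)) (Fin (2 ^ m)) ℂ) := by
  induction m with
  | zero =>
    obtain ⟨e₀⟩ := (nonempty_algEquiv_iff_finrank_eq_one (R := ℂ)
      (S := CliffordAlgebra (negSumSquares 0))).2 (by simp [CliffordAlgebra.finrank_eq_two_pow])
    obtain ⟨e₁⟩ := (nonempty_algEquiv_iff_finrank_eq_one (R := ℂ)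
      (S := Matrix (Fin (2 ^ 0)) (Fin (2 ^ 0)) ℂ)).2 (by simp [finrank_matrix])
    exact ⟨e₀.symm.trans e₁⟩
  | succ m ih =>
    obtain ⟨e⟩ := ih
    exact ⟨(negSumSquares.periodicityEquiv (2 * m)).trans <| e.mapMatrix.trans <|
      (compAlgEquiv _ _ ℂ ℂ).trans <|
        reindexAlgEquiv ℂ ℂ (finProdFinEquiv.trans (finCongr (pow_succ' 2 m).symm))⟩

/-- The Clifford algebra of the nondegenerate quadratic form `Q(x) = −∑ xᵢ²` on `ℂ^(2m)`
is isomorphic, as a ℂ-algebra, to the full matrix algebra of the `2^m`-dimensional spinor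
module `⋀•W` for a maximal totally isotropic subspace `W`. -/
theorem cliffordAlgebra_even_dim_iso_matrix (m : ℕ) (hm : 1 ≤ m) :
    Nonempty
      (CliffordAlgebra
          (QuadraticMap.weightedSumSquares ℂ (fun _ : Fin (2 * m) => (-1 : ℂ))) ≃ₐ[ℂ]
        Matrix (Fin (2 ^ m)) (Fin (2 ^ m)) ℂ) :=
  cliffordAlgebra_even_dim_iso_matrix_general m
end
end

section
/- In the Zorn vector-matrix algebra Z(R) over a commutative ring R, the norm is multiplicative: N(X·Y) = N(X)·N(Y) for all X, Y ∈ Z(R). -/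
/-- The underlying module of the Zorn vector-matrix algebra over a commutative ring `R`:
elements are `(a, v, w, b)` with `a, b ∈ R` and `v, w ∈ R³`. -/
abbrev ZornAlg (R : Type*) [CommRing R] := R × (Fin 3 → R) × (Fin 3 → R) × R

variable {R : Type*} [CommRing R]

/-- Multiplication of the Zorn vector-matrix (split octonion) algebra:
`(a,v,w,b)·(c,x,y,d) = (ac + ⟨v,y⟩, a•x + d•v + w×y, c•w + b•y − v×x, bd + ⟨w,x⟩)`. -/
def zornMul (X Y : ZornAlg R) : ZornAlg R :=
  (X.1 * Y.1 + dotProduct X.2.1 Y.2.2.1,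
   X.1 • Y.2.1 + Y.2.2.2 • X.2.1 + crossProduct X.2.2.1 Y.2.2.1,
   Y.1 • X.2.2.1 + X.2.2.2 • Y.2.2.1 - crossProduct X.2.1 Y.2.1,
   X.2.2.2 * Y.2.2.2 + dotProduct X.2.2.1 Y.2.1)

/-- The multiplicative unit `1 = (1, 0, 0, 1)` of the Zorn algebra. -/
def zornOne : ZornAlg R := (1, 0, 0, 1)

/-- The norm `N(a,v,w,b) = ab − ⟨v,w⟩` of the Zorn algebra. -/
def zornNorm (X : ZornAlg R) : R := X.1 * X.2.2.2 - dotProduct X.2.1 X.2.2.1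

/-- The trace `tr(a,v,w,b) = a + b` of the Zorn algebra. -/
def zornTrace (X : ZornAlg R) : R := X.1 + X.2.2.2

/-- The conjugation `(a,v,w,b)‾ = (b, −v, −w, a)` of the Zorn algebra. -/
def zornConj (X : ZornAlg R) : ZornAlg R := (X.2.2.2, -X.2.1, -X.2.2.1, X.1)

open Matrix

/-- The norm of the Zorn vector-matrix algebra is multiplicative. -/
theorem zornNorm_mul (X Y : ZornAlg R) :
    zornNorm (zornMul X Y) = zornNorm X * zornNorm Y := by
  obtain ⟨a, v, w, b⟩ := X
  obtain ⟨c, x, y, d⟩ := Y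
  simp only [zornNorm, zornMul, add_dotProduct, dotProduct_add, dotProduct_sub,
    smul_dotProduct, dotProduct_smul, smul_eq_mul]
  -- The four triple products with a repeated vector vanish, and the one product of two cross
  -- products is expanded by the Binet–Cauchy identity; what remains is a polynomial identity.
  rw [dot_self_cross, dot_cross_self, dotProduct_comm (w ⨯₃ y) w, dot_self_cross,
    dotProduct_comm (w ⨯₃ y) y, dot_cross_self, cross_dot_cross]
  rw [dotProduct_comm x w, dotProduct_comm x y, dotProduct_comm y v, dotProduct_comm y x,
    dotProduct_comm w v]
  ring
end
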